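/- arXiv:1710.04520 — 2 statements merged into one kernel-verified Lean document; each statement's English description precedes it below -/
import Mathlib

section
/- Let u : [0,T] → U be an N-admissible control with associated trajectory z = (z_1,…,z_N). Define the occupation measure μ_N as the pushforward of Lebesgue measure on [0,T] under the map t ↦ (t, z(t), u(t)), and the terminal measure μ_N^T := δ_{z(T)}. Then (μ_N, μ_N^T) is feasible for the linear program P_N: μ_N is a nonnegative Borel measure supported in [0,T] × Z_1 × ⋯ × Z_N × U, μ_N^T is a nonnegative Borel measure supported in Z_1^T × ⋯ × Z_N^T, the Liouville constraint ∫ g(T, y) dμ_N^T(y) − g(0, z^0) = ∫ [∂g/∂t + Σ_{k=1}^N (λ_k z_k + b_k(u)) ∂g/∂z_k] dμ_N holds for every continuously differentiable g : ℝ × ℝ^N → ℝ, and moreover ∫ h dμ_N = ∫_0^T h(t, u(t)) dt. Consequently, the LP optimal value P_N := inf { ∫ h dμ : (μ, μ^T) feasible } satisfies P_N ≤ J_N(0,T,z^0). -/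
/-!
Along a trajectory, `t ↦ g (t, z t)` is Lipschitz on `[0, T]`: the mode field is bounded there
because `z` stays in the compact intervals `Z_k` and `u` in the compact set `U`. It is therefore
absolutely continuous, with a.e. derivative `𝓛_N g (t, z t, u t)`, and the fundamental theorem of
calculus for absolutely continuous functions is exactly the Liouville constraint for the
occupation measure and `δ_{z T}`. For the values, every admissible control yields a feasible pair
of the same cost, and LP costs are bounded below: testing the constraint with `g = 1` and
`g = t` shows that `μ^T` has mass `1` and `μ` has mass `T`.
-/

open MeasureTheory

noncomputable section

/-- A bounded measurable control `u : [0,T] → U` is `N`-admissible if there exist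
absolutely continuous mode trajectories `z_1, …, z_N` (encoded via the integral form,
which encodes absolute continuity together with the a.e. mode ODE
`z_k' = λ_k z_k + b_k(u)`), with `z_k(0) = z_k^0`, `z_k(t) ∈ Z_k` on `[0,T]` and
`z_k(T) ∈ Z_k^T`. -/
def IsAdmissible (T : ℝ) {m : ℕ} (U : Set (Fin m → ℝ)) (lam : ℕ → ℝ)
    (b : ℕ → (Fin m → ℝ) →ₗ[ℝ] ℝ) (Z ZT : ℕ → Set ℝ) (z0 : ℕ → ℝ)
    (N : ℕ) (u : ℝ → Fin m → ℝ) : Prop :=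
  Measurable u ∧ (∀ t ∈ Set.Icc (0:ℝ) T, u t ∈ U) ∧
  ∀ k, 1 ≤ k → k ≤ N →
    ∃ z : ℝ → ℝ, z 0 = z0 k ∧
      IntervalIntegrable (fun s => lam k * z s + b k (u s)) volume 0 T ∧
      (∀ t ∈ Set.Icc (0:ℝ) T, z t = z0 k + ∫ s in (0:ℝ)..t, (lam k * z s + b k (u s))) ∧
      (∀ t ∈ Set.Icc (0:ℝ) T, z t ∈ Z k) ∧ z T ∈ ZT k

/-- The operator `𝓛_N g = ∂g/∂t + Σ_{k=1}^N f_k ∂g/∂z_k`, with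
`f_k(t,z,u) = λ_k z_k + b_k(u)`, evaluated at a point `p = (t, z, u)`. -/
def Lop {N m : ℕ} (lam : ℕ → ℝ) (b : ℕ → (Fin m → ℝ) →ₗ[ℝ] ℝ)
    (g : ℝ × (Fin N → ℝ) → ℝ) (p : ℝ × (Fin N → ℝ) × (Fin m → ℝ)) : ℝ :=
  fderiv ℝ g (p.1, p.2.1) (1, (0 : Fin N → ℝ)) +
    ∑ k : Fin N, (lam (k.1 + 1) * p.2.1 k + b (k.1 + 1) p.2.2) *
      fderiv ℝ g (p.1, p.2.1) ((0 : ℝ), Pi.single k (1 : ℝ))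

/-- Feasibility for the linear program `P_N`: `μ` is a (finite) nonnegative Borel
measure supported in `[0,T] × Z_1 × ⋯ × Z_N × U`, `μT` is a (finite) nonnegative
Borel measure supported in `Z_1^T × ⋯ × Z_N^T`, and the Liouville constraint
`∫ g(T,·) dμT − g(0,z⁰) = ∫ 𝓛_N g dμ` holds for every `C¹` test function `g`. -/
def LPFeasible (T : ℝ) {N m : ℕ} (U : Set (Fin m → ℝ)) (lam : ℕ → ℝ)
    (b : ℕ → (Fin m → ℝ) →ₗ[ℝ] ℝ) (Z ZT : ℕ → Set ℝ) (z0 : ℕ → ℝ)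
    (μ : Measure (ℝ × (Fin N → ℝ) × (Fin m → ℝ))) (μT : Measure (Fin N → ℝ)) : Prop :=
  IsFiniteMeasure μ ∧ IsFiniteMeasure μT ∧
  μ {p | ¬ (p.1 ∈ Set.Icc (0:ℝ) T ∧ (∀ k : Fin N, p.2.1 k ∈ Z (k.1 + 1)) ∧ p.2.2 ∈ U)} = 0 ∧
  μT {y | ¬ ∀ k : Fin N, y k ∈ ZT (k.1 + 1)} = 0 ∧
  ∀ g : ℝ × (Fin N → ℝ) → ℝ, ContDiff ℝ 1 g →
    (∫ y, g (T, y) ∂μT) - g (0, fun k : Fin N => z0 (k.1 + 1)) = ∫ p, Lop lam b g p ∂μ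

open Set
open scoped NNReal

theorem lipschitzOnWith_pi {α ι : Type*} [PseudoEMetricSpace α] [Fintype ι] {f : α → ι → ℝ}
    {K : ℝ≥0} {s : Set α} (hf : ∀ i, LipschitzOnWith K (fun x => f x i) s) :
    LipschitzOnWith K f s :=
  fun _ hx _ hy => edist_pi_le_iff.2 fun i => hf i hx hy

section IntervalPrimitive

variable {E : Type*} [NormedAddCommGroup E] [NormedSpace ℝ E] {f f' : ℝ → E} {a b : ℝ} {c : E}

theorem lipschitzOnWith_of_eq_add_integral {C : ℝ≥0} (hf' : IntervalIntegrable f' volume a b)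
    (hf : ∀ t ∈ Icc a b, f t = c + ∫ s in a..t, f' s) (hC : ∀ s ∈ Icc a b, ‖f' s‖ ≤ C) :
    LipschitzOnWith C f (Icc a b) := by
  have hint : ∀ r ∈ Icc a b, IntervalIntegrable f' volume a r := fun r hr =>
    hf'.mono_set (uIcc_subset_uIcc left_mem_uIcc (Icc_subset_uIcc hr))
  refine LipschitzOnWith.of_dist_le_mul fun t ht s hs => ?_
  rw [dist_eq_norm, hf t ht, hf s hs, add_sub_add_left_eq_sub,
    intervalIntegral.integral_interval_sub_left (hint t ht) (hint s hs), Real.dist_eq]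
  exact intervalIntegral.norm_integral_le_of_norm_le_const fun r hr =>
    hC r (uIcc_subset_Icc hs ht (uIoc_subset_uIcc hr))

theorem ae_hasDerivAt_of_eq_add_integral [CompleteSpace E] (hf' : IntervalIntegrable f' volume a b)
    (hf : ∀ t ∈ Icc a b, f t = c + ∫ s in a..t, f' s) :
    ∀ᵐ t, t ∈ Ioo a b → HasDerivAt f (f' t) t := by
  filter_upwards [hf'.ae_hasDerivAt_integral] with t hderiv ht
  have hab : a ≤ b := (ht.1.trans ht.2).le
  have hprim := (hderiv (by simpa [uIcc_of_le hab] using Ioo_subset_Icc_self ht) a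
    left_mem_uIcc).const_add c
  exact hprim.congr_of_eventuallyEq <| Filter.eventually_of_mem (Ioo_mem_nhds ht.1 ht.2)
    fun s hs => hf s (Ioo_subset_Icc_self hs)

end IntervalPrimitive

theorem LipschitzOnWith.integral_fderiv_comp_eq_sub {E : Type*} [NormedAddCommGroup E]
    [NormedSpace ℝ E] [ProperSpace E] {g : E → ℝ} (hg : ContDiff ℝ 1 g) {γ γ' : ℝ → E}
    {a b : ℝ} {K : ℝ≥0} (hab : a ≤ b) (hγ : LipschitzOnWith K γ (Icc a b))
    (hγ' : ∀ᵐ t, t ∈ Ioo a b → HasDerivAt γ (γ' t) t) :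
    ∫ t in a..b, fderiv ℝ g (γ t) (γ' t) = g (γ b) - g (γ a) := by
  obtain ⟨R, hR⟩ :=
    (isCompact_Icc.image_of_continuousOn hγ.continuousOn).isBounded.subset_closedBall 0
  obtain ⟨L, hL⟩ := hg.contDiffOn.exists_lipschitzOnWith one_ne_zero (convex_closedBall 0 R)
    (isCompact_closedBall 0 R)
  have hgγ : LipschitzOnWith (L * K) (g ∘ γ) (uIcc a b) := by
    rw [uIcc_of_le hab]
    exact hL.comp hγ fun t ht => hR (mem_image_of_mem γ ht)
  refine (intervalIntegral.integral_congr_ae ?_).trans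
    hgγ.absolutelyContinuousOnInterval.integral_deriv_eq_sub
  filter_upwards [hγ', Measure.ae_ne volume b] with t hderiv hb ht
  rw [uIoc_of_le hab] at ht
  exact (((hg.differentiable one_ne_zero (γ t)).hasFDerivAt.comp_hasDerivAt t
    (hderiv ⟨ht.1, lt_of_le_of_ne ht.2 hb⟩)).deriv).symm

theorem integral_map_restrict_of_continuousOn {X : Type*} [TopologicalSpace X]
    [SecondCountableTopology X] [MeasurableSpace X] [OpensMeasurableSpace X]
    {μ : Measure ℝ} {s : Set ℝ} {φ : ℝ → X} {S : Set X} {F : X → ℝ}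
    (hφ : AEMeasurable φ (μ.restrict s)) (hs : MeasurableSet s) (hS : MeasurableSet S)
    (hφS : ∀ t ∈ s, φ t ∈ S) (hF : ContinuousOn F S) :
    ∫ p, F p ∂(μ.restrict s).map φ = ∫ t in s, F (φ t) ∂μ := by
  have hsupp : ∀ᵐ p ∂(μ.restrict s).map φ, p ∈ S :=
    (ae_map_iff hφ hS).2 ((ae_restrict_iff' hs).2 (Filter.Eventually.of_forall hφS))
  refine integral_map hφ ?_
  rw [← Measure.restrict_eq_self_of_ae_mem hsupp]
  exact hF.aestronglyMeasurable hS

/-- The right-hand side `λ_k z_k + b_k(u)` of the mode equations; the component `k : Fin N` is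
the paper's mode `k + 1`. -/
def modeField {m N : ℕ} (lam : ℕ → ℝ) (b : ℕ → (Fin m → ℝ) →ₗ[ℝ] ℝ) (x : Fin N → ℝ)
    (w : Fin m → ℝ) : Fin N → ℝ :=
  fun k => lam (k.1 + 1) * x k + b (k.1 + 1) w

theorem continuous_modeField {m N : ℕ} (lam : ℕ → ℝ) (b : ℕ → (Fin m → ℝ) →ₗ[ℝ] ℝ) :
    Continuous fun p : (Fin N → ℝ) × (Fin m → ℝ) => modeField lam b p.1 p.2 :=
  continuous_pi fun k => (continuous_const.mul ((continuous_apply k).comp continuous_fst)).add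
    ((b (k.1 + 1)).continuous_of_finiteDimensional.comp continuous_snd)

theorem Lop_eq_fderiv_apply {m N : ℕ} (lam : ℕ → ℝ) (b : ℕ → (Fin m → ℝ) →ₗ[ℝ] ℝ)
    (g : ℝ × (Fin N → ℝ) → ℝ) (p : ℝ × (Fin N → ℝ) × (Fin m → ℝ)) :
    Lop lam b g p = fderiv ℝ g (p.1, p.2.1) (1, modeField lam b p.2.1 p.2.2) := by
  have hsplit : ∀ y : Fin N → ℝ,
      ((1 : ℝ), y) = (1, 0) + ∑ k, y k • ((0 : ℝ), (Pi.single k 1 : Fin N → ℝ)) := fun y => by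
    ext
    · simp [Prod.fst_sum]
    · simp [Prod.snd_sum, Pi.single_apply]
  rw [hsplit, map_add, map_sum]
  simp only [map_smul, smul_eq_mul]
  rfl

theorem continuous_Lop {m N : ℕ} (lam : ℕ → ℝ) (b : ℕ → (Fin m → ℝ) →ₗ[ℝ] ℝ)
    {g : ℝ × (Fin N → ℝ) → ℝ} (hg : ContDiff ℝ 1 g) : Continuous (Lop lam b g) := by
  simp_rw [funext (Lop_eq_fderiv_apply lam b g)]
  exact ((hg.continuous_fderiv one_ne_zero).comp (by fun_prop)).clm_apply
    (continuous_const.prodMk ((continuous_modeField lam b).comp continuous_snd))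

structure IsTrajectory (T : ℝ) {m N : ℕ} (lam : ℕ → ℝ) (b : ℕ → (Fin m → ℝ) →ₗ[ℝ] ℝ)
    (Z ZT : ℕ → Set ℝ) (z0 : ℕ → ℝ) (u : ℝ → Fin m → ℝ) (z : ℝ → Fin N → ℝ) : Prop where
  intervalIntegrable (k : Fin N) :
    IntervalIntegrable (fun s => modeField lam b (z s) (u s) k) volume 0 T
  eq_add_integral (k : Fin N) :
    ∀ t ∈ Icc 0 T, z t k = z0 (k.1 + 1) + ∫ s in (0 : ℝ)..t, modeField lam b (z s) (u s) k
  mem_Z (k : Fin N) : ∀ t ∈ Icc 0 T, z t k ∈ Z (k.1 + 1)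
  mem_ZT (k : Fin N) : z T k ∈ ZT (k.1 + 1)

def occupationMeasure (T : ℝ) {m N : ℕ} (z : ℝ → Fin N → ℝ) (u : ℝ → Fin m → ℝ) :
    Measure (ℝ × (Fin N → ℝ) × (Fin m → ℝ)) :=
  (volume.restrict (Icc 0 T)).map fun t => (t, z t, u t)

def lpSupport (T : ℝ) {m N : ℕ} (U : Set (Fin m → ℝ)) (Z : ℕ → Set ℝ) :
    Set (ℝ × (Fin N → ℝ) × (Fin m → ℝ)) :=
  {p | p.1 ∈ Icc 0 T ∧ (∀ k : Fin N, p.2.1 k ∈ Z (k.1 + 1)) ∧ p.2.2 ∈ U}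

theorem measurableSet_lpSupport {T : ℝ} {m N : ℕ} {U : Set (Fin m → ℝ)} {Z : ℕ → Set ℝ}
    (hU : MeasurableSet U) (hZ : ∀ k, MeasurableSet (Z k)) :
    MeasurableSet (lpSupport (N := N) T U Z) := by
  simp only [lpSupport, ofPred_and, ofPred_forall]
  exact (measurable_fst measurableSet_Icc).inter ((MeasurableSet.iInter fun k =>
    (measurable_pi_apply k).comp (measurable_fst.comp measurable_snd) (hZ _)).inter
    (measurable_snd.comp measurable_snd hU))

namespace IsTrajectory

variable {T : ℝ} {m N : ℕ} {U : Set (Fin m → ℝ)} {lam : ℕ → ℝ}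
  {b : ℕ → (Fin m → ℝ) →ₗ[ℝ] ℝ} {Z ZT : ℕ → Set ℝ} {z0 : ℕ → ℝ} {u : ℝ → Fin m → ℝ}
  {z : ℝ → Fin N → ℝ}

theorem apply_zero (hz : IsTrajectory T lam b Z ZT z0 u z) (hT : 0 ≤ T) :
    z 0 = fun k => z0 (k.1 + 1) :=
  funext fun k => by simpa using hz.eq_add_integral k 0 ⟨le_rfl, hT⟩

theorem exists_lipschitzOnWith (hz : IsTrajectory T lam b Z ZT z0 u z) (hU : IsCompact U)
    (hZ : ∀ k, IsCompact (Z k)) (huU : ∀ t ∈ Icc 0 T, u t ∈ U) :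
    ∃ K, LipschitzOnWith K z (Icc 0 T) := by
  obtain ⟨C, hC⟩ := ((isCompact_univ_pi fun k : Fin N => hZ (k.1 + 1)).prod
    hU).exists_bound_of_continuousOn (continuous_modeField lam b).continuousOn
  refine ⟨C.toNNReal, lipschitzOnWith_pi fun k => lipschitzOnWith_of_eq_add_integral
    (hz.intervalIntegrable k) (hz.eq_add_integral k) fun t ht => ?_⟩
  calc ‖modeField lam b (z t) (u t) k‖ ≤ ‖modeField lam b (z t) (u t)‖ := norm_le_pi_norm _ k
    _ ≤ C := hC (z t, u t) ⟨fun j _ => hz.mem_Z j t ht, huU t ht⟩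
    _ ≤ C.toNNReal := Real.le_coe_toNNReal C

theorem continuousOn (hz : IsTrajectory T lam b Z ZT z0 u z) : ContinuousOn z (Icc 0 T) :=
  continuousOn_pi.2 fun k =>
    ((continuousOn_const.add (intervalIntegral.continuousOn_primitive_interval'
      (hz.intervalIntegrable k) left_mem_uIcc)).mono Icc_subset_uIcc).congr
      (hz.eq_add_integral k)

theorem aemeasurable_path (hz : IsTrajectory T lam b Z ZT z0 u z) (hu : Measurable u) :
    AEMeasurable (fun t => (t, z t, u t)) (volume.restrict (Icc 0 T)) :=
  measurable_id.aemeasurable.prodMk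
    ((hz.continuousOn.aemeasurable measurableSet_Icc).prodMk hu.aemeasurable)

theorem ae_hasDerivAt (hz : IsTrajectory T lam b Z ZT z0 u z) :
    ∀ᵐ t, t ∈ Ioo 0 T → HasDerivAt z (modeField lam b (z t) (u t)) t := by
  filter_upwards [ae_all_iff.2 fun k =>
    ae_hasDerivAt_of_eq_add_integral (hz.intervalIntegrable k) (hz.eq_add_integral k)]
    with t hderiv ht
  exact hasDerivAt_pi.2 fun k => hderiv k ht

theorem sub_eq_integral_Lop (hz : IsTrajectory T lam b Z ZT z0 u z) (hT : 0 ≤ T)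
    (hU : IsCompact U) (hZ : ∀ k, IsCompact (Z k)) (huU : ∀ t ∈ Icc 0 T, u t ∈ U)
    {g : ℝ × (Fin N → ℝ) → ℝ} (hg : ContDiff ℝ 1 g) :
    g (T, z T) - g (0, fun k => z0 (k.1 + 1)) = ∫ t in Icc 0 T, Lop lam b g (t, z t, u t) := by
  obtain ⟨K, hK⟩ := hz.exists_lipschitzOnWith hU hZ huU
  have hγ' : ∀ᵐ t, t ∈ Ioo 0 T →
      HasDerivAt (fun t => (t, z t)) ((1 : ℝ), modeField lam b (z t) (u t)) t := by
    filter_upwards [hz.ae_hasDerivAt] with t hderiv ht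
    exact (hasDerivAt_id t).prodMk (hderiv ht)
  have hγ : LipschitzOnWith (max 1 K) (fun t => (t, z t)) (Icc 0 T) :=
    LipschitzWith.id.lipschitzOnWith.prodMk hK
  rw [← hz.apply_zero hT, ← hγ.integral_fderiv_comp_eq_sub hg hT hγ',
    intervalIntegral.integral_of_le hT, integral_Icc_eq_integral_Ioc]
  simp only [Lop_eq_fderiv_apply]

theorem integral_occupationMeasure (hz : IsTrajectory T lam b Z ZT z0 u z) (hu : Measurable u)
    {S : Set (ℝ × (Fin N → ℝ) × (Fin m → ℝ))} (hS : MeasurableSet S)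
    (hzuS : ∀ t ∈ Icc 0 T, (t, z t, u t) ∈ S) {F : ℝ × (Fin N → ℝ) × (Fin m → ℝ) → ℝ}
    (hF : ContinuousOn F S) :
    ∫ p, F p ∂occupationMeasure T z u = ∫ t in Icc 0 T, F (t, z t, u t) :=
  integral_map_restrict_of_continuousOn (hz.aemeasurable_path hu) measurableSet_Icc hS hzuS hF

theorem path_mem_lpSupport (hz : IsTrajectory T lam b Z ZT z0 u z)
    (huU : ∀ t ∈ Icc 0 T, u t ∈ U) : ∀ t ∈ Icc 0 T, (t, z t, u t) ∈ lpSupport T U Z :=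
  fun t ht => ⟨ht, fun k => hz.mem_Z k t ht, huU t ht⟩

theorem ae_mem_lpSupport (hz : IsTrajectory T lam b Z ZT z0 u z) (hU : MeasurableSet U)
    (hZ : ∀ k, MeasurableSet (Z k)) (hu : Measurable u) (huU : ∀ t ∈ Icc 0 T, u t ∈ U) :
    ∀ᵐ p ∂occupationMeasure T z u, p ∈ lpSupport T U Z :=
  (ae_map_iff (hz.aemeasurable_path hu) (measurableSet_lpSupport hU hZ)).2
    (ae_restrict_of_forall_mem measurableSet_Icc (hz.path_mem_lpSupport huU))

theorem lpFeasible (hz : IsTrajectory T lam b Z ZT z0 u z) (hT : 0 ≤ T) (hU : IsCompact U)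
    (hZ : ∀ k, IsCompact (Z k)) (hu : Measurable u) (huU : ∀ t ∈ Icc 0 T, u t ∈ U) :
    LPFeasible T U lam b Z ZT z0 (occupationMeasure T z u) (Measure.dirac (z T)) := by
  refine ⟨Measure.isFiniteMeasure_map _ _, inferInstance, ?_, ?_, fun g hg => ?_⟩
  · exact ae_iff.1 (hz.ae_mem_lpSupport hU.isClosed.measurableSet
      (fun k => (hZ k).isClosed.measurableSet) hu huU)
  · simp [Measure.dirac_apply, hz.mem_ZT]
  · rw [integral_dirac, hz.integral_occupationMeasure hu MeasurableSet.univ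
      (fun _ _ => mem_univ _) (continuous_Lop lam b hg).continuousOn]
    exact hz.sub_eq_integral_Lop hT hU hZ huU hg

theorem integral_occupationMeasure_cost (hz : IsTrajectory T lam b Z ZT z0 u z) (hT : 0 ≤ T)
    (hU : MeasurableSet U) (hZ : ∀ k, MeasurableSet (Z k)) (hu : Measurable u)
    (huU : ∀ t ∈ Icc 0 T, u t ∈ U) {h : ℝ → (Fin m → ℝ) → ℝ}
    (hh : ContinuousOn (fun p : ℝ × (Fin m → ℝ) => h p.1 p.2) (Icc 0 T ×ˢ U)) :
    ∫ p, h p.1 p.2.2 ∂occupationMeasure T z u = ∫ t in (0 : ℝ)..T, h t (u t) := by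
  rw [hz.integral_occupationMeasure (F := fun p => h p.1 p.2.2) hu (measurableSet_lpSupport hU hZ)
    (hz.path_mem_lpSupport huU)
    (hh.comp (continuous_fst.prodMk (continuous_snd.comp continuous_snd)).continuousOn
      fun _ hp => ⟨hp.1, hp.2.2⟩), intervalIntegral.integral_of_le hT,
    integral_Icc_eq_integral_Ioc]

theorem isAdmissible (hz : IsTrajectory T lam b Z ZT z0 u z) (hT : 0 ≤ T) (hu : Measurable u)
    (huU : ∀ t ∈ Icc 0 T, u t ∈ U) : IsAdmissible T U lam b Z ZT z0 N u := by
  refine ⟨hu, huU, fun k hk hkN => ?_⟩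
  obtain ⟨j, rfl⟩ : ∃ j, k = j + 1 := ⟨k - 1, by omega⟩
  let i : Fin N := ⟨j, by omega⟩
  exact ⟨fun t => z t i, congrFun (hz.apply_zero hT) i, hz.intervalIntegrable i,
    hz.eq_add_integral i, hz.mem_Z i, hz.mem_ZT i⟩

end IsTrajectory

theorem IsAdmissible.exists_isTrajectory {T : ℝ} {m N : ℕ} {U : Set (Fin m → ℝ)} {lam : ℕ → ℝ}
    {b : ℕ → (Fin m → ℝ) →ₗ[ℝ] ℝ} {Z ZT : ℕ → Set ℝ} {z0 : ℕ → ℝ} {u : ℝ → Fin m → ℝ}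
    (hu : IsAdmissible T U lam b Z ZT z0 N u) :
    ∃ z : ℝ → Fin N → ℝ, IsTrajectory T lam b Z ZT z0 u z := by
  choose z _ hint hode hZ hZT using fun k : Fin N => hu.2.2 (k.1 + 1) (by omega) (by omega)
  exact ⟨fun t k => z k t, hint, hode, hZ, hZT⟩

namespace LPFeasible

variable {T : ℝ} {m N : ℕ} {U : Set (Fin m → ℝ)} {lam : ℕ → ℝ}
  {b : ℕ → (Fin m → ℝ) →ₗ[ℝ] ℝ} {Z ZT : ℕ → Set ℝ} {z0 : ℕ → ℝ}
  {μ : Measure (ℝ × (Fin N → ℝ) × (Fin m → ℝ))} {μT : Measure (Fin N → ℝ)}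

theorem measureReal_univ_terminal (hμ : LPFeasible T U lam b Z ZT z0 μ μT) : μT.real univ = 1 := by
  have := hμ.2.2.2.2 (fun _ => 1) contDiff_const
  simp [Lop] at this
  linarith

theorem measureReal_univ (hμ : LPFeasible T U lam b Z ZT z0 μ μT) : μ.real univ = T := by
  have := hμ.2.2.2.2 (fun p => p.1) contDiff_fst
  simp [Lop, fderiv_fst, hμ.measureReal_univ_terminal] at this
  linarith

end LPFeasible

theorem bddBelow_lpCost {T : ℝ} {m N : ℕ} {U : Set (Fin m → ℝ)} (hU : IsCompact U)
    {lam : ℕ → ℝ} {b : ℕ → (Fin m → ℝ) →ₗ[ℝ] ℝ} {Z ZT : ℕ → Set ℝ} {z0 : ℕ → ℝ}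
    {h : ℝ → (Fin m → ℝ) → ℝ}
    (hh : ContinuousOn (fun p : ℝ × (Fin m → ℝ) => h p.1 p.2) (Icc 0 T ×ˢ U)) :
    BddBelow {c : ℝ | ∃ (μ : Measure (ℝ × (Fin N → ℝ) × (Fin m → ℝ))) (μT : Measure (Fin N → ℝ)),
      LPFeasible T U lam b Z ZT z0 μ μT ∧ c = ∫ p, h p.1 p.2.2 ∂μ} := by
  obtain ⟨M, hM⟩ := (isCompact_Icc.prod hU).exists_bound_of_continuousOn hh
  refine ⟨-(M * T), ?_⟩
  rintro c ⟨μ, μT, hμ, rfl⟩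
  have := hμ.1
  have hbound : ∀ᵐ p ∂μ, ‖h p.1 p.2.2‖ ≤ M := by
    filter_upwards [ae_iff.2 hμ.2.2.1] with p hp
    exact hM (p.1, p.2.2) ⟨hp.1, hp.2.2⟩
  have := norm_integral_le_of_norm_le_const hbound
  rw [hμ.measureReal_univ, Real.norm_eq_abs] at this
  linarith [neg_abs_le (∫ p, h p.1 p.2.2 ∂μ)]

theorem statement8_general
    (T : ℝ) (hT : 0 < T) (m N : ℕ)
    (U : Set (Fin m → ℝ)) (hU : IsCompact U)
    (lam : ℕ → ℝ) (b : ℕ → (Fin m → ℝ) →ₗ[ℝ] ℝ)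
    (Z ZT : ℕ → Set ℝ)
    (hZ : ∀ k, ∃ a c : ℝ, a ≤ c ∧ Z k = Set.Icc a c)
    (z0 : ℕ → ℝ) (h : ℝ → (Fin m → ℝ) → ℝ)
    (hh : ContinuousOn (fun p : ℝ × (Fin m → ℝ) => h p.1 p.2) (Set.Icc 0 T ×ˢ U))
    -- u is an N-admissible control with associated trajectory z
    (u : ℝ → Fin m → ℝ) (hu : Measurable u)
    (huU : ∀ t ∈ Set.Icc (0:ℝ) T, u t ∈ U)
    (z : ℝ → Fin N → ℝ)
    (hint : ∀ k : Fin N,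
      IntervalIntegrable (fun s => lam (k.1 + 1) * z s k + b (k.1 + 1) (u s)) volume 0 T)
    (hode : ∀ k : Fin N, ∀ t ∈ Set.Icc (0:ℝ) T,
      z t k = z0 (k.1 + 1) + ∫ s in (0:ℝ)..t, (lam (k.1 + 1) * z s k + b (k.1 + 1) (u s)))
    (hzZ : ∀ k : Fin N, ∀ t ∈ Set.Icc (0:ℝ) T, z t k ∈ Z (k.1 + 1))
    (hzT : ∀ k : Fin N, z T k ∈ ZT (k.1 + 1)) :
    LPFeasible T U lam b Z ZT z0
        (Measure.map (fun t => (t, z t, u t)) (volume.restrict (Set.Icc (0:ℝ) T)))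
        (Measure.dirac (z T)) ∧
    (∫ p : ℝ × (Fin N → ℝ) × (Fin m → ℝ), h p.1 p.2.2
        ∂(Measure.map (fun t => (t, z t, u t)) (volume.restrict (Set.Icc (0:ℝ) T))))
      = ∫ t in (0:ℝ)..T, h t (u t) ∧
    sInf {c : ℝ | ∃ (μ : Measure (ℝ × (Fin N → ℝ) × (Fin m → ℝ)))
          (μT : Measure (Fin N → ℝ)),
        LPFeasible T U lam b Z ZT z0 μ μT ∧ c = ∫ p, h p.1 p.2.2 ∂μ}
      ≤ sInf {c : ℝ | ∃ u', IsAdmissible T U lam b Z ZT z0 N u' ∧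
          c = ∫ t in (0:ℝ)..T, h t (u' t)} := by
  have hZc : ∀ k, IsCompact (Z k) := fun k => by
    obtain ⟨a, c, -, hk⟩ := hZ k
    exact hk ▸ isCompact_Icc
  have hZm : ∀ k, MeasurableSet (Z k) := fun k => (hZc k).isClosed.measurableSet
  have htraj : IsTrajectory T lam b Z ZT z0 u z := ⟨hint, hode, hzZ, hzT⟩
  refine ⟨htraj.lpFeasible hT.le hU hZc hu huU,
    htraj.integral_occupationMeasure_cost hT.le hU.isClosed.measurableSet hZm hu huU hh, ?_⟩
  refine csInf_le_csInf (bddBelow_lpCost hU hh) ⟨_, u, htraj.isAdmissible hT.le hu huU, rfl⟩ ?_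
  rintro c ⟨v, hv, rfl⟩
  obtain ⟨y, hy⟩ := hv.exists_isTrajectory
  exact ⟨_, _, hy.lpFeasible hT.le hU hZc hv.1 hv.2.1,
    (hy.integral_occupationMeasure_cost hT.le hU.isClosed.measurableSet hZm hv.1 hv.2.1 hh).symm⟩

/-- the occupation measure `μ_N` of an `N`-admissible control `u` with
trajectory `z` (the pushforward of Lebesgue measure on `[0,T]` by `t ↦ (t,z(t),u(t))`)
and the terminal measure `μ_N^T = δ_{z(T)}` are feasible for the LP `P_N`; the cost of
`μ_N` equals the cost of `u`; and consequently `P_N ≤ J_N(0,T,z⁰)`. -/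
theorem statement8
    (T : ℝ) (hT : 0 < T) (m N : ℕ) (hm : 0 < m) (hN : 0 < N)
    (U : Set (Fin m → ℝ)) (hU : IsCompact U)
    (lam : ℕ → ℝ) (b : ℕ → (Fin m → ℝ) →ₗ[ℝ] ℝ)
    (Z ZT : ℕ → Set ℝ)
    (hZ : ∀ k, ∃ a c : ℝ, a ≤ c ∧ Z k = Set.Icc a c)
    (hZT : ∀ k, ∃ a c : ℝ, a ≤ c ∧ ZT k = Set.Icc a c)
    (z0 : ℕ → ℝ) (h : ℝ → (Fin m → ℝ) → ℝ)
    (hh : ContinuousOn (fun p : ℝ × (Fin m → ℝ) => h p.1 p.2) (Set.Icc 0 T ×ˢ U))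
    -- u is an N-admissible control with associated trajectory z
    (u : ℝ → Fin m → ℝ) (hu : Measurable u)
    (huU : ∀ t ∈ Set.Icc (0:ℝ) T, u t ∈ U)
    (z : ℝ → Fin N → ℝ)
    (hz0 : ∀ k : Fin N, z 0 k = z0 (k.1 + 1))
    (hint : ∀ k : Fin N,
      IntervalIntegrable (fun s => lam (k.1 + 1) * z s k + b (k.1 + 1) (u s)) volume 0 T)
    (hode : ∀ k : Fin N, ∀ t ∈ Set.Icc (0:ℝ) T,
      z t k = z0 (k.1 + 1) + ∫ s in (0:ℝ)..t, (lam (k.1 + 1) * z s k + b (k.1 + 1) (u s)))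
    (hzZ : ∀ k : Fin N, ∀ t ∈ Set.Icc (0:ℝ) T, z t k ∈ Z (k.1 + 1))
    (hzT : ∀ k : Fin N, z T k ∈ ZT (k.1 + 1)) :
    LPFeasible T U lam b Z ZT z0
        (Measure.map (fun t => (t, z t, u t)) (volume.restrict (Set.Icc (0:ℝ) T)))
        (Measure.dirac (z T)) ∧
    (∫ p : ℝ × (Fin N → ℝ) × (Fin m → ℝ), h p.1 p.2.2
        ∂(Measure.map (fun t => (t, z t, u t)) (volume.restrict (Set.Icc (0:ℝ) T))))
      = ∫ t in (0:ℝ)..T, h t (u t) ∧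
    sInf {c : ℝ | ∃ (μ : Measure (ℝ × (Fin N → ℝ) × (Fin m → ℝ)))
          (μT : Measure (Fin N → ℝ)),
        LPFeasible T U lam b Z ZT z0 μ μT ∧ c = ∫ p, h p.1 p.2.2 ∂μ}
      ≤ sInf {c : ℝ | ∃ u', IsAdmissible T U lam b Z ZT z0 N u' ∧
          c = ∫ t in (0:ℝ)..T, h t (u' t)} :=
  statement8_general T hT m N U hU lam b Z ZT hZ z0 h hh u hu huU z hint hode hzZ hzT

end
end

section
/- Let u : [0,T] → U be bounded measurable and z = (z_1,…,z_N) : [0,T] → ℝ^N with each z_k absolutely continuous, z_k(0) = z_k^0, and z_k'(t) = λ_k z_k(t) + b_k(u(t)) for a.e. t ∈ [0,T]. Let μ_N be the pushforward of Lebesgue measure on [0,T] under t ↦ (t, z(t), u(t)) and μ_N^T := δ_{z(T)}. Then for every p ∈ ℕ and every multi-index α ∈ ℕ^N, the moments of (μ_N, μ_N^T) satisfy the linear constraint of the semidefinite relaxation: ∫ T^p y^α dμ_N^T(y) − 0^p (z^0)^α = ∫ [ p t^{p−1} z^α + Σ_{k=1}^N α_k t^p z^{α − e_k} (λ_k z_k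 + b_k(u)) ] dμ_N(t, z, u), where e_k is the k-th standard basis multi-index, z^α := z_1^{α_1}⋯z_N^{α_N}, and 0^p equals 1 if p = 0 and 0 otherwise. -/
open MeasureTheory

noncomputable section

section Aux

open Set

lemma fubini_prim {T : ℝ} (hT : 0 ≤ T) {a c : ℝ → ℝ}
    (ha : IntervalIntegrable a volume 0 T) (hc : IntervalIntegrable c volume 0 T) :
    (∫ t in (0:ℝ)..T, a t * ∫ s in (0:ℝ)..t, c s)
      + (∫ t in (0:ℝ)..T, c t * ∫ s in (0:ℝ)..t, a s)
    = (∫ t in (0:ℝ)..T, a t) * (∫ t in (0:ℝ)..T, c t) := by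
  set μ := volume.restrict (Set.Ioc (0:ℝ) T) with hμ
  have ha' : Integrable a μ := ha.1
  have hc' : Integrable c μ := hc.1
  have hAcont : ContinuousOn (fun x => ∫ t in (0:ℝ)..x, a t) (Set.uIcc 0 T) :=
    intervalIntegral.continuousOn_primitive_interval
      (by rw [Set.uIcc_of_le hT]; exact (integrableOn_Icc_iff_integrableOn_Ioc).2 ha.1)
  have hF : Integrable (Function.uncurry fun t s => if s ≤ t then a t * c s else 0)
      (μ.prod μ) := by
    have : (Function.uncurry fun t s => if s ≤ t then a t * c s else 0)
        = Set.indicator {q : ℝ × ℝ | q.2 ≤ q.1} (fun q => a q.1 * c q.2) := by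
      ext q
      simp [Function.uncurry, Set.indicator_apply]
    rw [this]
    exact (Integrable.mul_prod ha' hc').indicator
      ((isClosed_le continuous_snd continuous_fst).measurableSet)
  have step1 : (∫ t in (0:ℝ)..T, a t * ∫ s in (0:ℝ)..t, c s)
      = ∫ t, (∫ s, (if s ≤ t then a t * c s else 0) ∂μ) ∂μ := by
    rw [intervalIntegral.integral_of_le hT]
    refine setIntegral_congr_fun measurableSet_Ioc (fun t ht => ?_)
    have h1 : (fun s => if s ≤ t then a t * c s else 0)
        = Set.indicator (Set.Iic t) (fun s => a t * c s) := by
      ext s; simp [Set.indicator_apply]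
    rw [h1, hμ, setIntegral_indicator measurableSet_Iic]
    have h2 : Set.Ioc (0:ℝ) T ∩ Set.Iic t = Set.Ioc 0 t := by
      ext s; constructor
      · rintro ⟨⟨h1', h2'⟩, h3⟩; exact ⟨h1', h3⟩
      · rintro ⟨h1', h2'⟩; exact ⟨⟨h1', h2'.trans ht.2⟩, h2'⟩
    rw [h2, integral_const_mul, intervalIntegral.integral_of_le ht.1.le]
  have step2 : (∫ s, (∫ t, (if s ≤ t then a t * c s else 0) ∂μ) ∂μ)
      = ∫ s in Set.Ioc (0:ℝ) T,
          (((∫ t in (0:ℝ)..T, a t) - ∫ t in (0:ℝ)..s, a t) * c s) := by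
    refine setIntegral_congr_fun measurableSet_Ioc (fun s hs => ?_)
    have has : IntervalIntegrable a volume 0 s := by
      refine ha.mono_set ?_
      rw [Set.uIcc_of_le hs.1.le, Set.uIcc_of_le hT]
      exact Set.Icc_subset_Icc le_rfl hs.2
    have h1 : (fun t => if s ≤ t then a t * c s else 0)
        = Set.indicator (Set.Ici s) (fun t => a t * c s) := by
      ext t; simp [Set.indicator_apply]
    rw [h1, hμ, setIntegral_indicator measurableSet_Ici]
    have h2 : Set.Ioc (0:ℝ) T ∩ Set.Ici s = Set.Icc s T := by
      ext t; constructor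
      · rintro ⟨⟨h1', h2'⟩, h3⟩; exact ⟨h3, h2'⟩
      · rintro ⟨h1', h2'⟩; exact ⟨⟨lt_of_lt_of_le hs.1 h1', h2'⟩, h1'⟩
    rw [h2, integral_Icc_eq_integral_Ioc, ← intervalIntegral.integral_of_le hs.2,
      intervalIntegral.integral_mul_const,
      ← intervalIntegral.integral_interval_sub_left ha has]
  have hAc : Integrable (fun s => c s * (∫ t in (0:ℝ)..s, a t)) μ :=
    (hc.mul_continuousOn hAcont).1
  have expand : ∀ s : ℝ, ((∫ t in (0:ℝ)..T, a t) - ∫ t in (0:ℝ)..s, a t) * c s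
      = (∫ t in (0:ℝ)..T, a t) * c s - c s * (∫ t in (0:ℝ)..s, a t) := fun s => by ring
  rw [step1, integral_integral_swap hF, step2]
  simp_rw [expand]
  rw [integral_sub (hc'.const_mul _) hAc, integral_const_mul,
    intervalIntegral.integral_of_le hT (f := c),
    intervalIntegral.integral_of_le hT (f := fun t => c t * ∫ s in (0:ℝ)..t, a s)]
  ring

lemma prod_prim {T : ℝ} (hT : 0 ≤ T) {a c A C : ℝ → ℝ} {A0 C0 : ℝ}
    (ha : IntervalIntegrable a volume 0 T) (hc : IntervalIntegrable c volume 0 T)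
    (hA : ∀ t ∈ Set.Icc (0:ℝ) T, A t = A0 + ∫ s in (0:ℝ)..t, a s)
    (hC : ∀ t ∈ Set.Icc (0:ℝ) T, C t = C0 + ∫ s in (0:ℝ)..t, c s) :
    A T * C T = A0 * C0 + ∫ t in (0:ℝ)..T, (a t * C t + A t * c t) := by
  have key : (∫ t in (0:ℝ)..T, (a t * C t + A t * c t))
      = ∫ t in (0:ℝ)..T,
          (a t * (C0 + ∫ s in (0:ℝ)..t, c s) + (A0 + ∫ s in (0:ℝ)..t, a s) * c t) := by
    rw [intervalIntegral.integral_of_le hT, intervalIntegral.integral_of_le hT]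
    refine setIntegral_congr_fun measurableSet_Ioc (fun t ht => ?_)
    have ht' : t ∈ Set.Icc (0:ℝ) T := ⟨ht.1.le, ht.2⟩
    rw [hA t ht', hC t ht']
  have hAcont : ContinuousOn (fun x => ∫ t in (0:ℝ)..x, a t) (Set.uIcc 0 T) :=
    intervalIntegral.continuousOn_primitive_interval
      (by rw [Set.uIcc_of_le hT]; exact (integrableOn_Icc_iff_integrableOn_Ioc).2 ha.1)
  have hCcont : ContinuousOn (fun x => ∫ t in (0:ℝ)..x, c t) (Set.uIcc 0 T) :=
    intervalIntegral.continuousOn_primitive_interval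
      (by rw [Set.uIcc_of_le hT]; exact (integrableOn_Icc_iff_integrableOn_Ioc).2 hc.1)
  have i1 : IntervalIntegrable (fun t => a t * (C0 + ∫ s in (0:ℝ)..t, c s)) volume 0 T :=
    ha.mul_continuousOn (continuousOn_const.add hCcont)
  have i2 : IntervalIntegrable (fun t => (A0 + ∫ s in (0:ℝ)..t, a s) * c t) volume 0 T :=
    hc.continuousOn_mul (continuousOn_const.add hAcont)
  rw [key, intervalIntegral.integral_add i1 i2]
  have e1 : (∫ t in (0:ℝ)..T, a t * (C0 + ∫ s in (0:ℝ)..t, c s))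
      = C0 * (∫ t in (0:ℝ)..T, a t) + ∫ t in (0:ℝ)..T, a t * ∫ s in (0:ℝ)..t, c s := by
    have : (fun t => a t * (C0 + ∫ s in (0:ℝ)..t, c s))
        = fun t => C0 * a t + a t * ∫ s in (0:ℝ)..t, c s := by ext t; ring
    rw [this, intervalIntegral.integral_add (ha.const_mul C0)
      (ha.mul_continuousOn hCcont), intervalIntegral.integral_const_mul]
  have e2 : (∫ t in (0:ℝ)..T, (A0 + ∫ s in (0:ℝ)..t, a s) * c t)
      = A0 * (∫ t in (0:ℝ)..T, c t) + ∫ t in (0:ℝ)..T, c t * ∫ s in (0:ℝ)..t, a s := by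
    have : (fun t => (A0 + ∫ s in (0:ℝ)..t, a s) * c t)
        = fun t => A0 * c t + c t * ∫ s in (0:ℝ)..t, a s := by ext t; ring
    rw [this, intervalIntegral.integral_add (hc.const_mul A0)
      (hc.mul_continuousOn hAcont), intervalIntegral.integral_const_mul]
  rw [e1, e2, hA T ⟨hT, le_rfl⟩, hC T ⟨hT, le_rfl⟩]
  have := fubini_prim hT ha hc
  nlinarith [this]

lemma prod_prim_finset {ι : Type*} [DecidableEq ι] {T : ℝ} (hT : 0 ≤ T)
    (a A : ι → ℝ → ℝ) (A0 : ι → ℝ) (s : Finset ι) :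
    (∀ i ∈ s, IntervalIntegrable (a i) volume 0 T) →
    (∀ i ∈ s, ∀ t ∈ Set.Icc (0:ℝ) T, A i t = A0 i + ∫ r in (0:ℝ)..t, a i r) →
    ∀ t ∈ Set.Icc (0:ℝ) T,
      ∏ i ∈ s, A i t = (∏ i ∈ s, A0 i)
        + ∫ r in (0:ℝ)..t, ∑ i ∈ s, a i r * ∏ j ∈ s.erase i, A j r := by
  induction s using Finset.induction_on with
  | empty => intro _ _ t ht; simp
  | @insert i s' hi ih =>
    intro ha hA t ht
    have ha' : ∀ j ∈ s', IntervalIntegrable (a j) volume 0 T :=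
      fun j hj => ha j (Finset.mem_insert_of_mem hj)
    have hA' : ∀ j ∈ s', ∀ t ∈ Set.Icc (0:ℝ) T, A j t = A0 j + ∫ r in (0:ℝ)..t, a j r :=
      fun j hj => hA j (Finset.mem_insert_of_mem hj)
    have hQ := ih ha' hA'
    have hAcont : ∀ j ∈ s', ContinuousOn (A j) (Set.uIcc 0 T) := by
      intro j hj
      have : ContinuousOn (fun x => A0 j + ∫ r in (0:ℝ)..x, a j r) (Set.uIcc 0 T) :=
        continuousOn_const.add (intervalIntegral.continuousOn_primitive_interval
          (by rw [Set.uIcc_of_le hT]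
              exact (integrableOn_Icc_iff_integrableOn_Ioc).2 (ha' j hj).1))
      refine this.congr fun x hx => ?_
      rw [Set.uIcc_of_le hT] at hx
      exact hA' j hj x hx
    have hq : IntervalIntegrable
        (fun r => ∑ j ∈ s', a j r * ∏ k ∈ s'.erase j, A k r) volume 0 T := by
      have h := IntervalIntegrable.sum (μ := volume) (a := 0) (b := T) s'
        (f := fun j r => a j r * ∏ k ∈ s'.erase j, A k r) (fun j hj => ?_)
      · rwa [Finset.sum_fn] at h
      exact (ha' j hj).mul_continuousOn
        (continuousOn_finset_prod (f := A) _ fun k hk => hAcont k (Finset.mem_of_mem_erase hk))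
    have hsub : Set.uIcc (0:ℝ) t ⊆ Set.uIcc 0 T := by
      rw [Set.uIcc_of_le ht.1, Set.uIcc_of_le hT]
      exact Set.Icc_subset_Icc le_rfl ht.2
    have hsub' : Set.Icc (0:ℝ) t ⊆ Set.Icc 0 T := Set.Icc_subset_Icc le_rfl ht.2
    have key := prod_prim (A := A i) (C := fun x => ∏ j ∈ s', A j x) ht.1
      ((ha i (Finset.mem_insert_self i s')).mono_set hsub) (hq.mono_set hsub)
      (fun x hx => hA i (Finset.mem_insert_self i s') x (hsub' hx))
      (fun x hx => hQ x (hsub' hx))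
    rw [Finset.prod_insert hi, Finset.prod_insert hi, key]
    congr 1
    refine intervalIntegral.integral_congr fun r _ => ?_
    rw [Finset.sum_insert hi, Finset.erase_insert hi]
    congr 1
    rw [Finset.mul_sum]
    refine Finset.sum_congr rfl fun j hj => ?_
    rw [Finset.erase_insert_of_ne (fun h : i = j => hi (h ▸ hj)),
      Finset.prod_insert (fun h => hi (Finset.mem_of_mem_erase h))]
    ring

lemma prod_erase_eq_prod_ite {ι : Type*} [DecidableEq ι] [Fintype ι] (A : ι → ℝ) (i : ι) :
    ∏ j ∈ Finset.univ.erase i, A j = ∏ j : ι, (if j = i then 1 else A j) := by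
  rw [← Finset.mul_prod_erase Finset.univ (fun j => if j = i then 1 else A j)
    (Finset.mem_univ i), if_pos rfl, one_mul]
  exact (Finset.prod_congr rfl fun j hj => by
    rw [if_neg (Finset.mem_erase.1 hj).1]).symm

lemma prod_ite_eq_pow_pred {ι : Type*} [DecidableEq ι] [Fintype ι] (j : ι) (v : ℝ) :
    ∏ j' : ι, (if j' = j then 1 else v) = v ^ (Fintype.card ι - 1) := by
  rw [← prod_erase_eq_prod_ite, Finset.prod_const, Finset.card_erase_of_mem (Finset.mem_univ j),
    Finset.card_univ]

lemma sigma_prod_eval {N : ℕ} {α : Fin N → ℕ} (y : Fin N → ℝ) :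
    (∏ q : (k : Fin N) × Fin (α k), y q.1) = ∏ k, y k ^ α k := by
  rw [← Finset.univ_sigma_univ, Finset.prod_sigma]
  simp [Finset.prod_const]

lemma prod_eval {N p : ℕ} (α : Fin N → ℕ) (x : ℝ) (y : Fin N → ℝ) :
    (∏ i : ((k : Fin N) × Fin (α k)) ⊕ Fin p, Sum.elim (fun kj => y kj.1) (fun _ => x) i)
    = x ^ p * ∏ k, y k ^ α k := by
  rw [Fintype.prod_sum_type]
  simp only [Sum.elim_inl, Sum.elim_inr]
  rw [sigma_prod_eval, Finset.prod_const, Finset.card_univ, Fintype.card_fin, mul_comm]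

lemma sigma_erase_prod {N : ℕ} {α : Fin N → ℕ} (y : Fin N → ℝ)
    (q0 : (k : Fin N) × Fin (α k)) :
    (∏ q : (k' : Fin N) × Fin (α k'), (if q = q0 then 1 else y q.1))
    = ∏ k', y k' ^ (α k' - if k' = q0.1 then 1 else 0) := by
  obtain ⟨k, j⟩ := q0
  rw [← Finset.univ_sigma_univ, Finset.prod_sigma]
  refine Finset.prod_congr rfl fun k' _ => ?_
  by_cases h : k' = k
  · subst h
    have hcond : ∀ x : Fin (α k'), ((⟨k', x⟩ : (k'' : Fin N) × Fin (α k'')) = ⟨k', j⟩) ↔ x = j := by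
      intro x; simp [Sigma.ext_iff]
    rw [if_pos rfl,
      show (∏ x : Fin (α k'), if (⟨k', x⟩ : (k'' : Fin N) × Fin (α k'')) = ⟨k', j⟩
          then (1:ℝ) else y k')
        = ∏ x : Fin (α k'), if x = j then (1:ℝ) else y k' from
        Finset.prod_congr rfl fun x _ => if_congr (hcond x) rfl rfl]
    rw [prod_ite_eq_pow_pred j (y k'), Fintype.card_fin]
  · simp [Sigma.ext_iff, h, Finset.prod_const]

lemma sum_erase_eval {N : ℕ} (p : ℕ) (α : Fin N → ℕ) (x : ℝ) (y c : Fin N → ℝ) :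
    (∑ i : ((k : Fin N) × Fin (α k)) ⊕ Fin p,
      (Sum.elim (fun kj => c kj.1) (fun _ => (1:ℝ)) i)
        * ∏ j ∈ Finset.univ.erase i, (Sum.elim (fun kj => y kj.1) (fun _ => x) j))
    = (p : ℝ) * x ^ (p - 1) * ∏ j, y j ^ α j
      + ∑ k : Fin N, (α k : ℝ) * x ^ p * (∏ j, y j ^ (α j - if j = k then 1 else 0))
          * c k := by
  rw [Fintype.sum_sum_type, add_comm]
  congr 1
  · simp only [Sum.elim_inr, one_mul]
    have step : ∀ c' : Fin p,
        (∏ j ∈ Finset.univ.erase (Sum.inr c' : ((k : Fin N) × Fin (α k)) ⊕ Fin p),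
          Sum.elim (fun kj => y kj.1) (fun _ => x) j)
        = (∏ k, y k ^ α k) * x ^ (p - 1) := by
      intro c'
      rw [prod_erase_eq_prod_ite, Fintype.prod_sum_type]
      congr 1
      · simp only [Sum.elim_inl, reduceCtorEq, if_false]
        exact sigma_prod_eval y
      · trans (∏ c'' : Fin p, if c'' = c' then (1:ℝ) else x)
        · exact Finset.prod_congr rfl fun c'' _ => by
            by_cases h : c'' = c' <;> simp [h]
        · rw [prod_ite_eq_pow_pred c' x, Fintype.card_fin]
    simp only [step, Finset.sum_const, Finset.card_univ, Fintype.card_fin, nsmul_eq_mul]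
    ring
  · rw [← Finset.univ_sigma_univ, Finset.sum_sigma]
    refine Finset.sum_congr rfl fun k _ => ?_
    have step : ∀ j : Fin (α k),
        (∏ j' ∈ Finset.univ.erase
            (Sum.inl ⟨k, j⟩ : ((k' : Fin N) × Fin (α k')) ⊕ Fin p),
          Sum.elim (fun kj => y kj.1) (fun _ => x) j')
        = (∏ k', y k' ^ (α k' - if k' = k then 1 else 0)) * x ^ p := by
      intro j
      rw [prod_erase_eq_prod_ite, Fintype.prod_sum_type]
      congr 1
      · trans (∏ q : (k' : Fin N) × Fin (α k'), if q = ⟨k, j⟩ then (1:ℝ) else y q.1)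
        · exact Finset.prod_congr rfl fun q _ => by
            by_cases h : q = ⟨k, j⟩ <;> simp [h]
        · exact sigma_erase_prod y ⟨k, j⟩
      · simp only [reduceCtorEq, if_false, Sum.elim_inr, Finset.prod_const,
          Finset.card_univ, Fintype.card_fin]
    simp only [Sum.elim_inl, step, Finset.sum_const, Finset.card_univ, Fintype.card_fin,
      nsmul_eq_mul]
    ring

end Aux


/-- the moments of the occupation measure `μ_N` (pushforward of
Lebesgue measure on `[0,T]` by `t ↦ (t, z(t), u(t))`) and of the terminal measure
`μ_N^T = δ_{z(T)}` of an admissible pair satisfy, for every `p ∈ ℕ` and multi-index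
`α ∈ ℕ^N`, the linear constraint of the semidefinite relaxation:
`∫ Tᵖ yᵅ dμ_N^T(y) − 0ᵖ (z⁰)ᵅ
  = ∫ [ p t^{p−1} zᵅ + Σ_k α_k tᵖ z^{α−e_k} (λ_k z_k + b_k(u)) ] dμ_N(t,z,u)`. -/
theorem statement9
    (T : ℝ) (hT : 0 < T) (m N : ℕ) (hm : 0 < m) (hN : 0 < N)
    (U : Set (Fin m → ℝ)) (hU : IsCompact U)
    (lam : Fin N → ℝ) (b : Fin N → (Fin m → ℝ) →ₗ[ℝ] ℝ) (z0 : Fin N → ℝ)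
    (u : ℝ → Fin m → ℝ) (hu : Measurable u)
    (huU : ∀ t ∈ Set.Icc (0:ℝ) T, u t ∈ U)
    (z : ℝ → Fin N → ℝ)
    (hz0 : z 0 = z0)
    -- each mode z_k is absolutely continuous with ż_k = λ_k z_k + b_k(u) a.e.,
    -- encoded by the integral form
    (hint : ∀ k : Fin N,
      IntervalIntegrable (fun s => lam k * z s k + b k (u s)) volume 0 T)
    (hode : ∀ k : Fin N, ∀ t ∈ Set.Icc (0:ℝ) T,
      z t k = z0 k + ∫ s in (0:ℝ)..t, (lam k * z s k + b k (u s)))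
    (p : ℕ) (α : Fin N → ℕ) :
    (∫ y : Fin N → ℝ, T ^ p * ∏ k, y k ^ α k ∂(Measure.dirac (z T)))
        - (0 : ℝ) ^ p * ∏ k, z0 k ^ α k
      = ∫ q : ℝ × (Fin N → ℝ) × (Fin m → ℝ),
          ((p : ℝ) * q.1 ^ (p - 1) * ∏ j, q.2.1 j ^ α j
            + ∑ k : Fin N, (α k : ℝ) * q.1 ^ p
                * (∏ j, q.2.1 j ^ (α j - if j = k then 1 else 0))
                * (lam k * q.2.1 k + b k q.2.2))
          ∂(Measure.map (fun t => (t, z t, u t)) (volume.restrict (Set.Icc (0:ℝ) T)))  := by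
  have hT' : (0:ℝ) ≤ T := hT.le
  set f : ℝ × (Fin N → ℝ) × (Fin m → ℝ) → ℝ := fun q =>
    (p : ℝ) * q.1 ^ (p - 1) * ∏ j, q.2.1 j ^ α j
      + ∑ k : Fin N, (α k : ℝ) * q.1 ^ p * (∏ j, q.2.1 j ^ (α j - if j = k then 1 else 0))
          * (lam k * q.2.1 k + b k q.2.2) with hf
  have hbc : ∀ k, Continuous (b k) := fun k => (b k).continuous_of_finiteDimensional
  have hfc : Continuous f := by
    apply Continuous.add
    · exact (continuous_const.mul (continuous_fst.pow _)).mul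
        (continuous_finset_prod _ fun j _ =>
          ((continuous_apply j).comp (continuous_fst.comp continuous_snd)).pow _)
    · refine continuous_finset_sum _ fun k _ => ?_
      exact ((continuous_const.mul (continuous_fst.pow _)).mul
        (continuous_finset_prod _ fun j _ =>
          ((continuous_apply j).comp (continuous_fst.comp continuous_snd)).pow _)).mul
        ((continuous_const.mul
          ((continuous_apply k).comp (continuous_fst.comp continuous_snd))).add
          ((hbc k).comp (continuous_snd.comp continuous_snd)))
  set μ := volume.restrict (Set.Icc (0:ℝ) T) with hμ
  have hzae : AEMeasurable z μ := by
    have hZcont : ContinuousOn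
        (fun t (k : Fin N) => z0 k + ∫ s in (0:ℝ)..t, (lam k * z s k + b k (u s)))
        (Set.Icc 0 T) := by
      refine continuousOn_pi.2 fun k => ?_
      have h2 := intervalIntegral.continuousOn_primitive_interval
        (f := fun s => lam k * z s k + b k (u s)) (μ := volume) (a := 0) (b := T)
        (by rw [Set.uIcc_of_le hT']
            exact (integrableOn_Icc_iff_integrableOn_Ioc).2 (hint k).1)
      rw [Set.uIcc_of_le hT'] at h2
      exact continuousOn_const.add h2
    refine (hZcont.aemeasurable measurableSet_Icc).congr ?_
    refine (MeasureTheory.ae_restrict_iff' measurableSet_Icc).2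
      (Filter.Eventually.of_forall fun t ht => ?_)
    funext k
    exact (hode k t ht).symm
  have hg : AEMeasurable (fun t => (t, z t, u t)) μ :=
    aemeasurable_id.prodMk (hzae.prodMk hu.aemeasurable)
  rw [MeasureTheory.integral_dirac, MeasureTheory.integral_map hg hfc.aestronglyMeasurable]
  rw [hμ, MeasureTheory.integral_Icc_eq_integral_Ioc, ← intervalIntegral.integral_of_le hT']
  have main := prod_prim_finset (ι := ((k : Fin N) × Fin (α k)) ⊕ Fin p) hT'
    (Sum.elim (fun kj s => lam kj.1 * z s kj.1 + b kj.1 (u s)) (fun _ _ => (1:ℝ)))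
    (Sum.elim (fun kj t => z t kj.1) (fun _ t => t))
    (Sum.elim (fun kj => z0 kj.1) (fun _ => (0:ℝ)))
    Finset.univ
    (fun i _ => by
      rcases i with kj | c
      · exact hint kj.1
      · exact intervalIntegrable_const)
    (fun i _ t ht => by
      rcases i with kj | c
      · exact hode kj.1 t ht
      · simp)
    T ⟨hT', le_rfl⟩
  have hprodT : (∏ i : ((k : Fin N) × Fin (α k)) ⊕ Fin p,
      Sum.elim (fun kj t => z t kj.1) (fun _ t => t) i T) = T ^ p * ∏ k, z T k ^ α k := by
    rw [← prod_eval (p := p) α T (fun k => z T k)]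
    exact Finset.prod_congr rfl fun i _ => by rcases i with kj | c <;> rfl
  have hprod0 : (∏ i : ((k : Fin N) × Fin (α k)) ⊕ Fin p,
      Sum.elim (fun kj => z0 kj.1) (fun _ => (0:ℝ)) i) = (0:ℝ) ^ p * ∏ k, z0 k ^ α k :=
    prod_eval α 0 z0
  have hintegrand : ∀ r : ℝ,
      (∑ i : ((k : Fin N) × Fin (α k)) ⊕ Fin p,
        (Sum.elim (fun kj s => lam kj.1 * z s kj.1 + b kj.1 (u s)) (fun _ _ => (1:ℝ)) i r)
          * ∏ j ∈ Finset.univ.erase i,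
              (Sum.elim (fun kj t => z t kj.1) (fun _ t => t) j r))
      = f (r, z r, u r) := by
    intro r
    simp only [hf]
    rw [← sum_erase_eval p α r (fun k => z r k) (fun k => lam k * z r k + b k (u r))]
    refine Finset.sum_congr rfl fun i _ => ?_
    congr 1
    · rcases i with kj | c <;> rfl
    · refine Finset.prod_congr rfl fun j _ => ?_
      rcases j with kj | c <;> rfl
  rw [hprodT, hprod0] at main
  rw [main, add_sub_cancel_left]
  exact intervalIntegral.integral_congr fun r _ => hintegrand r

end
end
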